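/- arXiv:1109.4729 — 2 statements merged into one kernel-verified Lean document; each statement's English description precedes it below -/
import Mathlib

section
/- In the firefighter process on a finite connected graph G with source s, if some vertex of G is at distance greater than k from s, then the strategy that at each time step i ≤ k protects an unburned vertex at distance i from s lying on a shortest path from s to a fixed vertex at distance greater than k saves at least k vertices. -/
attribute [local instance] Classical.propDecidable

namespace Firefighter

variable {V : Type*} [Fintype V] [DecidableEq V]

/-- The set of vertices burned by the end of time step `t` in the firefighter
process on a graph `G` with fire source `s`, where `p i` is the vertex protected
in round `i` (if any); in each round the protection happens first, then the fire
spreads from burning vertices to all their unprotected neighbors. -/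
noncomputable def burn (G : SimpleGraph V) (s : V) (p : ℕ → Option V) :
    ℕ → Finset V
  | 0 => {s}
  | t + 1 => burn G s p t ∪ Finset.univ.filter
      (fun v => (∃ u ∈ burn G s p t, G.Adj u v) ∧ ∀ i ≤ t + 1, p i ≠ some v)

/-- `v` is protected at some round of strategy `p`. -/
def Protected (p : ℕ → Option V) (v : V) : Prop := ∃ i, p i = some v

/-- A valid strategy: nothing is protected at time `0`, and a vertex protected in
round `t` is neither burned before round `t` nor previously protected. -/
def Valid (G : SimpleGraph V) (s : V) (p : ℕ → Option V) : Prop :=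
  p 0 = none ∧
    ∀ t v, p t = some v → v ∉ burn G s p (t - 1) ∧ ∀ i < t, p i ≠ some v

/-- `v` eventually burns under strategy `p`. -/
def Burns (G : SimpleGraph V) (s : V) (p : ℕ → Option V) (v : V) : Prop :=
  ∃ t, v ∈ burn G s p t

/-- `v` is saved (never burns) under strategy `p`. -/
def Saved (G : SimpleGraph V) (s : V) (p : ℕ → Option V) (v : V) : Prop :=
  ∀ t, v ∉ burn G s p t

end Firefighter

namespace FFAux

variable {V : Type*} {G : SimpleGraph V}

lemma dist_getVert_le (hconn : G.Connected) {s w : V} (q : G.Walk s w) (i : ℕ) :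
    G.dist s (q.getVert i) ≤ i := by
  induction i with
  | zero => simp
  | succ i ih =>
    by_cases h : i < q.length
    · have hadj := q.adj_getVert_succ h
      calc G.dist s (q.getVert (i+1))
          ≤ G.dist s (q.getVert i) + G.dist (q.getVert i) (q.getVert (i+1)) :=
            hconn.dist_triangle
        _ ≤ i + 1 := by
            have h1 : G.dist (q.getVert i) (q.getVert (i+1)) ≤ 1 := by
              simpa using SimpleGraph.dist_le hadj.toWalk
            omega
    · rw [q.getVert_of_length_le (by omega)]
      exact (SimpleGraph.dist_le q).trans (by omega)

lemma dist_getVert_eq (hconn : G.Connected) {s w : V} (q : G.Walk s w)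
    (hq : q.length = G.dist s w) {i : ℕ} (hi : i ≤ q.length) :
    G.dist s (q.getVert i) = i := by
  have h1 := dist_getVert_le hconn q i
  have h2 : G.dist (q.getVert i) w ≤ q.length - i := by
    have := dist_getVert_le hconn q.reverse (q.length - i)
    rw [q.getVert_reverse] at this
    have hii : q.length - (q.length - i) = i := by omega
    rw [hii] at this
    rwa [SimpleGraph.dist_comm] at this
  have h3 : G.dist s w ≤ G.dist s (q.getVert i) + G.dist (q.getVert i) w :=
    hconn.dist_triangle
  omega

lemma dist_of_mem_burn {V : Type*} [Fintype V] [DecidableEq V]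
    {G : SimpleGraph V} (hconn : G.Connected) (s : V) (p : ℕ → Option V) :
    ∀ t v, v ∈ Firefighter.burn G s p t → G.dist s v ≤ t := by
  intro t
  induction t with
  | zero =>
    intro v hv
    simp only [Firefighter.burn, Finset.mem_singleton] at hv
    simp [hv]
  | succ t ih =>
    intro v hv
    simp only [Firefighter.burn, Finset.mem_union, Finset.mem_filter] at hv
    rcases hv with hv | ⟨-, ⟨u, hu, hadj⟩, -⟩
    · exact (ih v hv).trans (by omega)
    · have h1 : G.dist u v ≤ 1 := by simpa using SimpleGraph.dist_le hadj.toWalk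
      have h2 : G.dist s v ≤ G.dist s u + G.dist u v := hconn.dist_triangle
      have := ih u hu
      omega

end FFAux

open Firefighter in
/-- If some vertex `w` is at distance greater than `k` from the source, then the
strategy that in each round `i ≤ k` protects the vertex at distance `i` from `s`
on a fixed shortest path from `s` to `w` saves at least `k` vertices. -/
theorem shortest_path_strategy_saves_k
    {V : Type*} [Fintype V] [DecidableEq V] (G : SimpleGraph V)
    (hconn : G.Connected) (s w : V) (k : ℕ) (hk : k < G.dist s w)
    (q : G.Walk s w) (hq : q.length = G.dist s w)
    (p : ℕ → Option V)
    (hp : ∀ i : ℕ, p i = if 1 ≤ i ∧ i ≤ k then some (q.getVert i) else none) :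
    k ≤ (Finset.univ.filter (Saved G s p)).card := by
  have hdist : ∀ i ∈ Finset.Icc 1 k, G.dist s (q.getVert i) = i := by
    intro i hi
    rw [Finset.mem_Icc] at hi
    exact FFAux.dist_getVert_eq hconn q hq (by omega)
  -- each protected vertex is saved
  have hsaved : ∀ i ∈ Finset.Icc 1 k, Saved G s p (q.getVert i) := by
    intro i hi
    have hi' := Finset.mem_Icc.mp hi
    have hd := hdist i hi
    intro t
    induction t with
    | zero =>
      simp only [burn, Finset.mem_singleton]
      intro h
      rw [h, SimpleGraph.dist_self] at hd
      omega
    | succ t iht =>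
      simp only [burn, Finset.mem_union, Finset.mem_filter, not_or]
      refine ⟨iht, ?_⟩
      rintro ⟨-, ⟨u, hu, hadj⟩, hprot⟩
      have hle : i ≤ t + 1 := by
        have h1 : G.dist u (q.getVert i) ≤ 1 := by
          simpa using SimpleGraph.dist_le hadj.toWalk
        have h2 : G.dist s (q.getVert i) ≤ G.dist s u + G.dist u (q.getVert i) :=
          hconn.dist_triangle
        have h3 := FFAux.dist_of_mem_burn hconn s p t u hu
        omega
      exact hprot i hle (by rw [hp i, if_pos ⟨hi'.1, hi'.2⟩])
  -- the saved vertices q.getVert i, 1 ≤ i ≤ k, are pairwise distinct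
  have hinj : Set.InjOn (fun i => q.getVert i) (Finset.Icc 1 k) := by
    intro i hi j hj hij
    have h1 := hdist i (Finset.mem_coe.mp hi)
    have h2 := hdist j (Finset.mem_coe.mp hj)
    rw [show q.getVert i = q.getVert j from hij, h2] at h1
    omega
  calc k = (Finset.Icc 1 k).card := by simp
    _ = ((Finset.Icc 1 k).image (fun i => q.getVert i)).card :=
        (Finset.card_image_of_injOn hinj).symm
    _ ≤ (Finset.univ.filter (Saved G s p)).card := by
        apply Finset.card_le_card
        intro v hv
        simp only [Finset.mem_image] at hv
        obtain ⟨i, hi, rfl⟩ := hv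
        simp only [Finset.mem_filter, Finset.mem_univ, true_and]
        exact hsaved i hi
end

section
/- The two versions of the firefighter game are equivalent: on a finite graph G with source s, there is a strategy in the standard game (protect exactly one unburned vertex per round) leaving at most k burned vertices if and only if there is a strategy in the modified game (in each round protect an arbitrary set of unburned vertices each having a burning neighbor, subject to the constraint that after i rounds at most i vertices in total are protected) leaving at most k burned vertices. -/
attribute [local instance] Classical.propDecidable

namespace Firefighter

variable {V : Type*} [Fintype V] [DecidableEq V]

/-- Burned vertices by time `t` in the modified game, where `S i` is the set of
vertices protected in round `i`. -/
noncomputable def mburn (G : SimpleGraph V) (s : V) (S : ℕ → Finset V) :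
    ℕ → Finset V
  | 0 => {s}
  | t + 1 => mburn G s S t ∪ Finset.univ.filter
      (fun v => (∃ u ∈ mburn G s S t, G.Adj u v) ∧ ∀ i ≤ t + 1, v ∉ S i)

/-- A valid strategy for the modified game: nothing is protected at time `0`;
every vertex protected in round `t` is unburned, not previously protected, and
adjacent to a burning vertex; and after `i` rounds at most `i` vertices are
protected in total. -/
def MValid (G : SimpleGraph V) (s : V) (S : ℕ → Finset V) : Prop :=
  S 0 = ∅ ∧
  (∀ t v, v ∈ S t → v ∉ mburn G s S (t - 1) ∧ (∀ i < t, v ∉ S i) ∧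
    ∃ u ∈ mburn G s S (t - 1), G.Adj u v) ∧
  (∀ i : ℕ, ((Finset.range (i + 1)).biUnion S).card ≤ i)

/-- `v` eventually burns in the modified game. -/
def MBurns (G : SimpleGraph V) (s : V) (S : ℕ → Finset V) (v : V) : Prop :=
  ∃ t, v ∈ mburn G s S t

end Firefighter

/-!
A standard strategy `p` becomes a modified one by delaying the protection of each vertex until
the first round in which `p` has already protected it and the fire is adjacent to it. The fire
then spreads exactly as under `p`, and the vertices protected by round `i` are among the values
`p 1, …, p i`, so there are at most `i` of them.

Conversely, let `r v` be the round in which a modified strategy protects `v`. The budget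
constraint (at most `i` vertices with `r v ≤ i`) is precisely Hall's condition for choosing
distinct rounds `f v ∈ [1, r v]`. Protecting each `v` in round `f v` of the standard game is
valid, and since every vertex is protected no later than before, no more vertices burn.
-/
namespace Firefighter

section Scheduling

variable {α : Type*}

theorem exists_injective_mem_Icc_of_card_le_sup {ι : Type*} (r : ι → ℕ)
    (h : ∀ X : Finset ι, X.card ≤ X.sup r) :
    ∃ f : ι → ℕ, Function.Injective f ∧ ∀ x, f x ∈ Finset.Icc 1 (r x) := by
  refine (Finset.all_card_le_biUnion_card_iff_exists_injective _).1 fun X => ?_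
  have hunion : X.biUnion (fun x => Finset.Icc 1 (r x)) = Finset.Icc 1 (X.sup r) := by
    ext n
    simp only [Finset.mem_biUnion, Finset.mem_Icc]
    constructor
    · rintro ⟨x, hx, h1, hn⟩
      exact ⟨h1, hn.trans (Finset.le_sup hx)⟩
    · rintro ⟨h1, hn⟩
      obtain ⟨x, hx, hnx⟩ := (Finset.le_sup_iff (by rw [Nat.bot_eq_zero]; omega)).1 hn
      exact ⟨x, hx, h1, hnx⟩
  simpa [hunion] using h X

theorem card_le_of_forall_exists_eq_some {X : Finset α} {p : ℕ → Option α}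
    {n : ℕ} (h : ∀ v ∈ X, ∃ j ∈ Finset.Icc 1 n, p j = some v) : X.card ≤ n :=
  calc X.card ≤ ((Finset.Icc 1 n).image p).card :=
        Finset.card_le_card_of_injOn some
          (fun v hv => by
            obtain ⟨j, hj, hpj⟩ := h v hv
            exact Finset.mem_image.2 ⟨j, hj, hpj⟩)
          (Option.some_injective α).injOn
    _ ≤ n := Finset.card_image_le.trans (by simp)

noncomputable def firstRound (S : ℕ → Finset α) (x : {v // ∃ i, v ∈ S i}) : ℕ :=
  sInf {i | x.1 ∈ S i}

theorem mem_firstRound {S : ℕ → Finset α} (x : {v // ∃ i, v ∈ S i}) :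
    x.1 ∈ S (firstRound S x) :=
  Nat.sInf_mem x.2

theorem firstRound_le {S : ℕ → Finset α} {i : ℕ} {v : α} (hv : v ∈ S i) :
    firstRound S ⟨v, i, hv⟩ ≤ i :=
  Nat.sInf_le hv

theorem card_le_sup_firstRound [DecidableEq α] {S : ℕ → Finset α}
    (hS : ∀ i, ((Finset.range (i + 1)).biUnion S).card ≤ i)
    (X : Finset {v // ∃ i, v ∈ S i}) : X.card ≤ X.sup (firstRound S) :=
  calc X.card = (X.map (Function.Embedding.subtype _)).card := (Finset.card_map _).symm
    _ ≤ ((Finset.range (X.sup (firstRound S) + 1)).biUnion S).card := by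
      refine Finset.card_le_card fun v hv => ?_
      obtain ⟨x, hx, rfl⟩ := Finset.mem_map.1 hv
      exact Finset.mem_biUnion.2 ⟨firstRound S x,
        Finset.mem_range.2 (Nat.lt_succ_of_le (Finset.le_sup hx)), mem_firstRound x⟩
    _ ≤ X.sup (firstRound S) := hS _

noncomputable def ofSchedule {P : α → Prop} (f : {v // P v} → ℕ) (j : ℕ) : Option α :=
  (Function.partialInv f j).map Subtype.val

theorem ofSchedule_eq_some_iff {P : α → Prop} {f : {v // P v} → ℕ}
    (hf : Function.Injective f) {j : ℕ} {v : α} :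
    ofSchedule f j = some v ↔ ∃ x : {v // P v}, f x = j ∧ x.1 = v := by
  simp only [ofSchedule, Option.map_eq_some_iff]
  exact exists_congr fun x => and_congr_left' (hf.isPartialInv x j)

end Scheduling

variable {V : Type*} [Fintype V] [DecidableEq V] (G : SimpleGraph V) (s : V)

theorem burn_mono (p : ℕ → Option V) : Monotone (burn G s p) :=
  monotone_nat_of_le_succ fun t => by
    rw [burn]
    exact Finset.subset_union_left

theorem burn_subset_mburn {p : ℕ → Option V} {S : ℕ → Finset V}
    (h : ∀ i v, v ∈ S i → ∃ j ≤ i, p j = some v) (t : ℕ) :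
    burn G s p t ⊆ mburn G s S t := by
  induction t with
  | zero => simp [burn, mburn]
  | succ t ih =>
    rw [burn, mburn]
    refine Finset.union_subset_union ih fun v hv => ?_
    simp only [Finset.mem_filter, Finset.mem_univ, true_and] at hv ⊢
    obtain ⟨⟨u, hu, huv⟩, hp⟩ := hv
    refine ⟨⟨u, ih hu, huv⟩, fun i hi hvi => ?_⟩
    obtain ⟨j, hji, hj⟩ := h i v hvi
    exact hp j (hji.trans hi) hj

theorem mburn_subset_burn {p : ℕ → Option V} {S : ℕ → Finset V}
    (h : ∀ t i v, i ≤ t + 1 → p i = some v → v ∉ burn G s p t →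
      (∃ u ∈ burn G s p t, G.Adj u v) → ∃ j ≤ t + 1, v ∈ S j) (t : ℕ) :
    mburn G s S t ⊆ burn G s p t := by
  induction t with
  | zero => simp [burn, mburn]
  | succ t ih =>
    intro v hv
    rw [mburn, Finset.mem_union] at hv
    rw [burn, Finset.mem_union]
    by_cases hvt : v ∈ burn G s p t
    · exact Or.inl hvt
    rcases hv with hv | hv
    · exact Or.inl (ih hv)
    simp only [Finset.mem_filter, Finset.mem_univ, true_and] at hv ⊢
    obtain ⟨⟨u, hu, huv⟩, hS⟩ := hv
    have hadj : ∃ u ∈ burn G s p t, G.Adj u v := ⟨u, ih hu, huv⟩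
    refine Or.inr ⟨hadj, fun i hi hpi => ?_⟩
    obtain ⟨j, hj, hvj⟩ := h t i v hi hpi hvt hadj
    exact hS j hj hvj

theorem card_burns_le_card_mburns {p : ℕ → Option V} {S : ℕ → Finset V}
    (h : ∀ t, burn G s p t ⊆ mburn G s S t) :
    (Finset.univ.filter (Burns G s p)).card ≤
      (Finset.univ.filter (MBurns G s S)).card :=
  Finset.card_le_card <| Finset.monotone_filter_right _ fun _ _ ⟨t, hv⟩ => ⟨t, h t hv⟩

theorem card_mburns_le_card_burns {p : ℕ → Option V} {S : ℕ → Finset V}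
    (h : ∀ t, mburn G s S t ⊆ burn G s p t) :
    (Finset.univ.filter (MBurns G s S)).card ≤
      (Finset.univ.filter (Burns G s p)).card :=
  Finset.card_le_card <| Finset.monotone_filter_right _ fun _ _ ⟨t, hv⟩ => ⟨t, h t hv⟩

section toModified

variable (p : ℕ → Option V)

def ReadyAt (v : V) (i : ℕ) : Prop :=
  (∃ j ≤ i, p j = some v) ∧ ∃ u ∈ burn G s p (i - 1), G.Adj u v

/-- Each vertex protected by `p` is protected as late as possible: in the first round in which
`p` has already protected it and the fire has reached one of its neighbours. -/
noncomputable def toModified (i : ℕ) : Finset V :=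
  Finset.univ.filter fun v =>
    v ∉ burn G s p (i - 1) ∧ ReadyAt G s p v i ∧ ∀ j < i, ¬ ReadyAt G s p v j

theorem exists_le_eq_some_of_mem_toModified {i : ℕ} {v : V} (hv : v ∈ toModified G s p i) :
    ∃ j ≤ i, p j = some v := by
  simp only [toModified, Finset.mem_filter] at hv
  exact hv.2.2.1.1

theorem mburn_toModified : mburn G s (toModified G s p) = burn G s p := by
  funext t
  refine subset_antisymm (mburn_subset_burn G s (fun t i v hi hpi hvt hadj => ?_) t)
    (burn_subset_mburn G s (fun i v => exists_le_eq_some_of_mem_toModified G s p) t)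
  have hready : ∃ i, ReadyAt G s p v i := ⟨t + 1, ⟨i, hi, hpi⟩, hadj⟩
  have hfirst : Nat.find hready ≤ t + 1 := Nat.find_min' hready ⟨⟨i, hi, hpi⟩, hadj⟩
  refine ⟨Nat.find hready, hfirst, ?_⟩
  simp only [toModified, Finset.mem_filter, Finset.mem_univ, true_and]
  exact ⟨fun hb => hvt (burn_mono G s p (by omega) hb), Nat.find_spec hready,
    fun j hj => Nat.find_min hready hj⟩

theorem mValid_toModified (hp : p 0 = none) : MValid G s (toModified G s p) := by
  simp only [MValid, mburn_toModified]
  refine ⟨?_, fun t v hv => ?_,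
    fun i => card_le_of_forall_exists_eq_some (p := p) fun v hv => ?_⟩
  · ext v
    simp [toModified, ReadyAt, hp]
  · simp only [toModified, Finset.mem_filter] at hv ⊢
    obtain ⟨-, hvb, ⟨-, hadj⟩, hfirst⟩ := hv
    exact ⟨hvb, fun i hi hvi => hfirst i hi hvi.2.2.1, hadj⟩
  · obtain ⟨j, hj, hvj⟩ := Finset.mem_biUnion.1 hv
    obtain ⟨l, hlj, hpl⟩ := exists_le_eq_some_of_mem_toModified G s p hvj
    have hl : l ≠ 0 := by rintro rfl; simp [hp] at hpl
    exact ⟨l, Finset.mem_Icc.2 ⟨by omega, by rw [Finset.mem_range] at hj; omega⟩, hpl⟩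

end toModified

theorem exists_valid_burn_subset_mburn {S : ℕ → Finset V} (hS : MValid G s S) :
    ∃ p, Valid G s p ∧ ∀ t, burn G s p t ⊆ mburn G s S t := by
  obtain ⟨f, hf, hfr⟩ :=
    exists_injective_mem_Icc_of_card_le_sup (firstRound S) (card_le_sup_firstRound hS.2.2)
  have hprotect : ∀ i v, v ∈ S i → ∃ j ≤ i, ofSchedule f j = some v := fun i v hv =>
    ⟨f ⟨v, i, hv⟩, (Finset.mem_Icc.1 (hfr _)).2.trans (firstRound_le hv),
      (ofSchedule_eq_some_iff hf).2 ⟨_, rfl, rfl⟩⟩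
  have hburn := burn_subset_mburn G s hprotect
  refine ⟨ofSchedule f, ⟨?_, fun t v hv => ?_⟩, hburn⟩
  · refine Option.eq_none_iff_forall_ne_some.2 fun v h => ?_
    obtain ⟨x, hx, -⟩ := (ofSchedule_eq_some_iff hf).1 h
    simpa [hx] using hfr x
  · obtain ⟨x, rfl, rfl⟩ := (ofSchedule_eq_some_iff hf).1 hv
    have hle := (Finset.mem_Icc.1 (hfr x)).2
    refine ⟨fun hb => (hS.2.1 _ _ (mem_firstRound x)).1
      (hburn _ (burn_mono G s _ (Nat.sub_le_sub_right hle 1) hb)), fun i hi hpi => ?_⟩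
    obtain ⟨y, rfl, hyx⟩ := (ofSchedule_eq_some_iff hf).1 hpi
    exact hi.ne (congrArg f (Subtype.ext hyx))

end Firefighter

open Firefighter in
/-- The standard firefighter game (protect at most one unburned vertex per
round) and the modified game (protect any set of unburned vertices with a
burning neighbor, with at most `i` vertices protected in total after `i` rounds)
are equivalent: one admits a strategy leaving at most `k` burned vertices iff
the other does. -/
theorem standard_game_iff_modified_game
    {V : Type*} [Fintype V] [DecidableEq V] (G : SimpleGraph V)
    (s : V) (k : ℕ) :
    (∃ p : ℕ → Option V, Valid G s p ∧
      (Finset.univ.filter (Burns G s p)).card ≤ k) ↔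
    (∃ S : ℕ → Finset V, MValid G s S ∧
      (Finset.univ.filter (MBurns G s S)).card ≤ k) := by
  constructor
  · rintro ⟨p, hp, hk⟩
    refine ⟨toModified G s p, mValid_toModified G s p hp.1, le_trans ?_ hk⟩
    exact card_mburns_le_card_burns G s (fun t => (mburn_toModified G s p).le t)
  · rintro ⟨S, hS, hk⟩
    obtain ⟨p, hp, hburn⟩ := exists_valid_burn_subset_mburn G s hS
    exact ⟨p, hp, (card_burns_le_card_mburns G s hburn).trans hk⟩
end
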